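/- Let k ≥ 3 be an integer and set α = k - 1 + √(k(k-2)) and β = k - 1 - √(k(k-2)). For every integer i ≥ 0, let a_i be the positive integer with (a_i : ℝ) = (α^(i+1) + α^i + β^(i+1) + β^i)/2. Then 2(k-2) divides k - 4 + a_i, so n_i = (k - 4 + a_i)/(2(k-2)) is an integer; moreover n_0 = 1 and n_i ≥ 1 for all i ≥ 0. -/
import Mathlib


/-- `s = √(k(k-2))`. -/
noncomputable def pellSqrt (k : ℤ) : ℝ := Real.sqrt ((k : ℝ) * ((k : ℝ) - 2))

/-- `α = k - 1 + √(k(k-2))`. -/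
noncomputable def pellAlpha (k : ℤ) : ℝ := (k : ℝ) - 1 + pellSqrt k

/-- `β = k - 1 - √(k(k-2))`. -/
noncomputable def pellBeta (k : ℤ) : ℝ := (k : ℝ) - 1 - pellSqrt k

theorem n_is_integer (k : ℤ) (hk : 3 ≤ k) (a : ℕ → ℤ)
    (ha : ∀ i : ℕ, 0 < a i ∧
      (a i : ℝ) = (pellAlpha k ^ (i + 1) + pellAlpha k ^ i +
          pellBeta k ^ (i + 1) + pellBeta k ^ i) / 2) :
    (∀ i : ℕ, 2 * (k - 2) ∣ k - 4 + a i) ∧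
      (k - 4 + a 0) / (2 * (k - 2)) = 1 ∧
      ∀ i : ℕ, 1 ≤ (k - 4 + a i) / (2 * (k - 2)) := by
  have hk3 : (3 : ℝ) ≤ (k : ℝ) := by exact_mod_cast hk
  have hnn : (0 : ℝ) ≤ (k : ℝ) * ((k : ℝ) - 2) := by nlinarith
  have hs2 : pellSqrt k ^ 2 = (k : ℝ) * ((k : ℝ) - 2) := Real.sq_sqrt hnn
  have hαq : pellAlpha k ^ 2 = 2 * ((k : ℝ) - 1) * pellAlpha k - 1 := by
    unfold pellAlpha; nlinarith [hs2]
  have hβq : pellBeta k ^ 2 = 2 * ((k : ℝ) - 1) * pellBeta k - 1 := by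
    unfold pellBeta; nlinarith [hs2]
  have hA : ∀ n : ℕ, pellAlpha k ^ (n + 2) =
      2 * ((k : ℝ) - 1) * pellAlpha k ^ (n + 1) - pellAlpha k ^ n := by
    intro n
    calc pellAlpha k ^ (n + 2) = pellAlpha k ^ n * pellAlpha k ^ 2 := by ring
    _ = pellAlpha k ^ n * (2 * ((k : ℝ) - 1) * pellAlpha k - 1) := by rw [hαq]
    _ = 2 * ((k : ℝ) - 1) * pellAlpha k ^ (n + 1) - pellAlpha k ^ n := by ring
  have hB : ∀ n : ℕ, pellBeta k ^ (n + 2) =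
      2 * ((k : ℝ) - 1) * pellBeta k ^ (n + 1) - pellBeta k ^ n := by
    intro n
    calc pellBeta k ^ (n + 2) = pellBeta k ^ n * pellBeta k ^ 2 := by ring
    _ = pellBeta k ^ n * (2 * ((k : ℝ) - 1) * pellBeta k - 1) := by rw [hβq]
    _ = 2 * ((k : ℝ) - 1) * pellBeta k ^ (n + 1) - pellBeta k ^ n := by ring
  have ha0 : a 0 = k := by
    have h := (ha 0).2
    have : ((a 0 : ℤ) : ℝ) = ((k : ℤ) : ℝ) := by
      rw [h]
      have : pellAlpha k + pellBeta k = 2 * ((k : ℝ) - 1) := by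
        unfold pellAlpha pellBeta; ring
      simp only [pow_one, pow_zero]
      push_cast
      linarith
    exact_mod_cast this
  have hrec : ∀ i : ℕ, a (i + 2) = 2 * (k - 1) * a (i + 1) - a i := by
    intro i
    have h2 := (ha (i + 2)).2
    have h1 := (ha (i + 1)).2
    have h0 := (ha i).2
    have : ((a (i + 2) : ℤ) : ℝ) = ((2 * (k - 1) * a (i + 1) - a i : ℤ) : ℝ) := by
      push_cast
      rw [h2, h1, h0]
      have e1 := hA (i + 1)
      have e2 := hA i
      have e3 := hB (i + 1)
      have e4 := hB i
      have : i + 2 + 1 = i + 1 + 2 := by ring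
      rw [this, e1, e2, e3, e4]
      ring
    exact_mod_cast this
  have ha1 : a 1 = 2 * k ^ 2 - 3 * k := by
    have h := (ha 1).2
    have hsum : pellAlpha k + pellBeta k = 2 * ((k : ℝ) - 1) := by
      unfold pellAlpha pellBeta; ring
    have : ((a 1 : ℤ) : ℝ) = ((2 * k ^ 2 - 3 * k : ℤ) : ℝ) := by
      push_cast
      rw [h]
      simp only [pow_one]
      rw [hαq, hβq]
      linear_combination ((2 * (k : ℝ) - 1) / 2) * hsum
    exact_mod_cast this
  -- growth: k ≤ a i and a i ≤ a (i+1)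
  have hgrow : ∀ i : ℕ, k ≤ a i ∧ a i ≤ a (i + 1) := by
    intro i
    induction i with
    | zero =>
      constructor
      · rw [ha0]
      · rw [ha0, ha1]; nlinarith [hk]
    | succ n ih =>
      obtain ⟨h1, h2⟩ := ih
      have hk' : k ≤ a (n + 1) := le_trans h1 h2
      constructor
      · exact hk'
      · rw [hrec n]
        nlinarith [h1, h2, hk]
  -- divisibility (two-step induction)
  have hdvd : ∀ i : ℕ, 2 * (k - 2) ∣ k - 4 + a i ∧ 2 * (k - 2) ∣ k - 4 + a (i + 1) := by
    intro i
    induction i with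
    | zero =>
      constructor
      · rw [ha0]; exact ⟨1, by ring⟩
      · rw [ha1]; exact ⟨k + 1, by ring⟩
    | succ n ih =>
      obtain ⟨d1, d2⟩ := ih
      refine ⟨d2, ?_⟩
      rw [hrec n]
      obtain ⟨c1, hc1⟩ := d1
      obtain ⟨c2, hc2⟩ := d2
      refine ⟨2 * (k - 1) * c2 - c1 - (k - 4), ?_⟩
      have e1 : a n = 2 * (k - 2) * c1 - (k - 4) := by linarith
      have e2 : a (n + 1) = 2 * (k - 2) * c2 - (k - 4) := by linarith
      rw [e1, e2]; ring
  have hd : ∀ i : ℕ, 2 * (k - 2) ∣ k - 4 + a i := fun i => (hdvd i).1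
  have hpos : (0 : ℤ) < 2 * (k - 2) := by omega
  refine ⟨hd, ?_, ?_⟩
  · rw [ha0]
    have : k - 4 + k = 2 * (k - 2) * 1 := by ring
    rw [this, Int.mul_ediv_cancel_left _ (by omega : (2 * (k - 2) : ℤ) ≠ 0)]
  · intro i
    obtain ⟨c, hc⟩ := hd i
    have hki : k ≤ a i := (hgrow i).1
    have hc1 : 1 ≤ c := by nlinarith
    rw [hc, Int.mul_ediv_cancel_left _ (by omega : (2 * (k - 2) : ℤ) ≠ 0)]
    exact hc1
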